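/- If $\mu : [0, \frac{\pi}{4}) \to \mathbb{R}$ is locally Lipschitz with $\mu(0) = 1$ and satisfies $\mu'(s) + \mu(s)^2 \le -1$ at almost every point, then $\mu(s) \le \tan\left(\frac{\pi}{4} - s\right)$ for all $s \in [0, \frac{\pi}{4})$. -/

import Mathlib

/-!
Put `f s = arctan (μ s) + s`. Since `arctan` is smooth, `f` is locally Lipschitz, hence absolutely
continuous on compact intervals, and `f b - f a` is the integral of `f'`. The Riccati inequality
gives `f' = μ' / (1 + μ²) + 1 ≤ 0` almost everywhere, so `f s ≤ f 0 = π / 4`, i.e.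
`arctan (μ s) ≤ π / 4 - s`, and applying the increasing function `tan` gives the bound.
-/

open Real MeasureTheory Set

theorem LocallyLipschitz.absolutelyContinuousOnInterval {X : Type*} [PseudoMetricSpace X]
    {f : ℝ → X} (hf : LocallyLipschitz f) (a b : ℝ) : AbsolutelyContinuousOnInterval f a b := by
  obtain ⟨K, hK⟩ := hf.locallyLipschitzOn.exists_lipschitzOnWith_of_compact isCompact_uIcc
  exact hK.absolutelyContinuousOnInterval

theorem AbsolutelyContinuousOnInterval.le_of_ae_deriv_nonpos {f : ℝ → ℝ} {a b : ℝ}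
    (hf : AbsolutelyContinuousOnInterval f a b) (hab : a ≤ b)
    (hderiv : ∀ᵐ x ∂volume.restrict (Ioc a b), deriv f x ≤ 0) : f b ≤ f a := by
  have hftc := hf.integral_deriv_eq_sub
  rw [intervalIntegral.integral_of_le hab] at hftc
  linarith [setIntegral_nonpos_of_ae_restrict hderiv]

theorem deriv_arctan_comp_le_neg_one {μ : ℝ → ℝ} {x : ℝ} (hμ : DifferentiableAt ℝ μ x)
    (hriccati : deriv μ x + μ x ^ 2 ≤ -1) : deriv (fun s => arctan (μ s)) x ≤ -1 := by
  have hpos : 0 < 1 + μ x ^ 2 := by positivity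
  rw [hμ.hasDerivAt.arctan.deriv, div_mul_eq_mul_div, one_mul, div_le_iff₀ hpos]
  linarith

theorem le_tan_of_arctan_le {x y : ℝ} (h : arctan x ≤ y) (hy : y < π / 2) : x ≤ tan y := by
  have hx := neg_pi_div_two_lt_arctan x
  rw [← tan_arctan x]
  exact strictMonoOn_tan.monotoneOn ⟨hx, arctan_lt_pi_div_two x⟩ ⟨by linarith, hy⟩ h

theorem stmt_8 (μ : ℝ → ℝ)
    (hlip : LocallyLipschitz μ)
    (h0 : μ 0 = 1)
    (hae : ∀ᵐ s ∂(volume.restrict (Set.Ico 0 (π / 4))),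
      DifferentiableAt ℝ μ s ∧ deriv μ s + (μ s) ^ 2 ≤ -1) :
    ∀ s ∈ Set.Ico (0 : ℝ) (π / 4), μ s ≤ Real.tan (π / 4 - s) := by
  rintro s ⟨hs0, hsπ⟩
  set f : ℝ → ℝ := fun x => arctan (μ x) + x
  have hf : LocallyLipschitz f :=
    (contDiff_arctan.locallyLipschitz.comp hlip).add LocallyLipschitz.id
  have hderiv : ∀ᵐ x ∂volume.restrict (Ioc 0 s), deriv f x ≤ 0 := by
    have hsub : Ioc 0 s ⊆ Ico 0 (π / 4) := fun x hx => ⟨hx.1.le, hx.2.trans_lt hsπ⟩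
    filter_upwards [ae_restrict_of_ae_restrict_of_subset hsub hae] with x ⟨hμ, hriccati⟩
    have hd : HasDerivAt f (deriv (fun y => arctan (μ y)) x + 1) x :=
      hμ.arctan.hasDerivAt.add (hasDerivAt_id' x)
    linarith [hd.deriv, deriv_arctan_comp_le_neg_one hμ hriccati]
  have hmono : f s ≤ f 0 :=
    (hf.absolutelyContinuousOnInterval 0 s).le_of_ae_deriv_nonpos hs0 hderiv
  have harctan : arctan (μ s) ≤ π / 4 - s := by
    simp only [f, h0, arctan_one, add_zero] at hmono
    linarith
  exact le_tan_of_arctan_le harctan (by linarith [pi_pos])
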